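/- Let ρ > 0. For every x ∈ ℝⁿ with ‖x‖_∞ ≤ √(2/ρ), the zero vector belongs to prox_{(1/ρ)h₂}(x). -/

import Mathlib

/-- The ℓ₁ norm on `ℝⁿ`. -/
noncomputable def l1norm {n : ℕ} (x : Fin n → ℝ) : ℝ := ∑ i, |x i|

/-- The ℓ₂ norm on `ℝⁿ`. -/
noncomputable def l2norm {n : ℕ} (x : Fin n → ℝ) : ℝ := Real.sqrt (∑ i, (x i) ^ 2)

-- `h₂(x) = (‖x‖₁/‖x‖₂)²` for `x ≠ 0`, and `h₂(0) = 0`.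
open Classical in
noncomputable def h2 {n : ℕ} (x : Fin n → ℝ) : ℝ :=
  if x = 0 then 0 else (l1norm x / l2norm x) ^ 2

/-- `prox_{(1/ρ) f}(z)`: the set of global minimizers of `(ρ/2)‖u - z‖₂² + f(u)`. -/
noncomputable def proxSet {n : ℕ} (ρ : ℝ) (f : (Fin n → ℝ) → ℝ) (z : Fin n → ℝ) :
    Set (Fin n → ℝ) :=
  {u | ∀ v : Fin n → ℝ,
    ρ / 2 * (∑ i, (u i - z i) ^ 2) + f u ≤ ρ / 2 * (∑ i, (v i - z i) ^ 2) + f v}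

/-!
Expanding `‖v - x‖₂²`, the zero vector is a proximal point of `h₂` at `x` as soon as
`ρ⟪v, x⟫ ≤ (ρ/2)‖v‖₂² + (‖v‖₁/‖v‖₂)²` for every `v ≠ 0`. By Hölder,
`ρ⟪v, x⟫ ≤ c‖v‖₁` with `c = ρ√(2/ρ)`, and the AM-GM inequality
`c‖v‖₁ ≤ (c²/4)‖v‖₂² + (‖v‖₁/‖v‖₂)²` concludes, since `c²/4 = ρ/2`.
-/

lemma zero_mem_proxSet_of_forall {n : ℕ} {ρ : ℝ} {f : (Fin n → ℝ) → ℝ} {x : Fin n → ℝ}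
    (hf : f 0 = 0) (h : ∀ v, ρ * ∑ i, v i * x i ≤ ρ / 2 * ∑ i, v i ^ 2 + f v) :
    (0 : Fin n → ℝ) ∈ proxSet ρ f x := by
  intro v
  have expand : ∑ i, (v i - x i) ^ 2 = ∑ i, v i ^ 2 - 2 * ∑ i, v i * x i + ∑ i, x i ^ 2 := by
    rw [Finset.mul_sum, ← Finset.sum_sub_distrib, ← Finset.sum_add_distrib]
    exact Finset.sum_congr rfl fun i _ => by ring
  simp only [Pi.zero_apply, zero_sub, neg_sq, hf, expand]
  linarith [h v]

lemma sum_mul_le_mul_l1norm {n : ℕ} {c : ℝ} {x : Fin n → ℝ} (hx : ∀ i, |x i| ≤ c)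
    (v : Fin n → ℝ) : ∑ i, v i * x i ≤ c * l1norm v := by
  rw [l1norm, Finset.mul_sum]
  refine Finset.sum_le_sum fun i _ => ?_
  calc v i * x i ≤ |v i| * |x i| := by rw [← abs_mul]; exact le_abs_self _
    _ ≤ c * |v i| := by rw [mul_comm]; exact mul_le_mul_of_nonneg_right (hx i) (abs_nonneg _)

lemma l2norm_sq {n : ℕ} (v : Fin n → ℝ) : l2norm v ^ 2 = ∑ i, v i ^ 2 :=
  Real.sq_sqrt (Finset.sum_nonneg fun i _ => sq_nonneg (v i))

lemma l2norm_ne_zero {n : ℕ} {v : Fin n → ℝ} (hv : v ≠ 0) : l2norm v ≠ 0 := by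
  obtain ⟨j, hj⟩ := Function.ne_iff.mp hv
  refine (Real.sqrt_pos.mpr ?_).ne'
  exact Finset.sum_pos' (fun i _ => sq_nonneg _) ⟨j, Finset.mem_univ j, pow_two_pos_of_ne_zero hj⟩

lemma mul_le_sq_div_four_mul_sq_add_div_sq (c a : ℝ) {b : ℝ} (hb : b ≠ 0) :
    c * a ≤ c ^ 2 / 4 * b ^ 2 + (a / b) ^ 2 := by
  have hca : c * a = c * b * (a / b) := by rw [mul_assoc, mul_div_cancel₀ a hb]
  nlinarith [sq_nonneg (c * b / 2 - a / b)]

lemma mul_l1norm_le_h2 {n : ℕ} {c : ℝ} (v : Fin n → ℝ) :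
    c * l1norm v ≤ c ^ 2 / 4 * ∑ i, v i ^ 2 + h2 v := by
  by_cases hv : v = 0
  · subst hv
    simp [l1norm, h2]
  · rw [h2, if_neg hv, ← l2norm_sq]
    exact mul_le_sq_div_four_mul_sq_add_div_sq c _ (l2norm_ne_zero hv)

theorem stmt_11 {n : ℕ} (ρ : ℝ) (hρ : 0 < ρ) (x : Fin n → ℝ)
    (hx : ∀ i, |x i| ≤ Real.sqrt (2 / ρ)) :
    (0 : Fin n → ℝ) ∈ proxSet ρ h2 x := by
  refine zero_mem_proxSet_of_forall (by simp [h2]) fun v => ?_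
  set c := ρ * Real.sqrt (2 / ρ)
  have hc : c ^ 2 / 4 = ρ / 2 := by
    rw [mul_pow, Real.sq_sqrt (by positivity)]
    field_simp
    ring
  calc ρ * ∑ i, v i * x i ≤ c * l1norm v := by
        rw [mul_assoc]; exact mul_le_mul_of_nonneg_left (sum_mul_le_mul_l1norm hx v) hρ.le
    _ ≤ ρ / 2 * ∑ i, v i ^ 2 + h2 v := hc ▸ mul_l1norm_le_h2 v
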